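/- For a CSS code with H_X = [A B] and H_Z = [Bᵀ Aᵀ] where A, B are n×n circulant matrices over F_2 given by polynomials a(x), b(x), the number of logical qubits is k = 2n − rank(H_X) − rank(H_Z) = 2·deg gcd(a(x), b(x), x^n − 1). -/

import Mathlib

open Polynomial Matrix

/-- The `n × n` cyclic shift (permutation) matrix. -/
def cyclicShift (n : ℕ) [NeZero n] (R : Type*) [Semiring R] : Matrix (Fin n) (Fin n) R :=
  fun i j => if j = i + 1 then 1 else 0


noncomputable section GBaux

local notation "F₂" => ZMod 2

private def fn (n : ℕ) : (ZMod 2)[X] := X ^ n - 1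

private lemma fn_natDegree (n : ℕ) [NeZero n] : (fn n).natDegree = n := by
  rw [fn, ← C_1, natDegree_X_pow_sub_C]

private lemma fn_ne_zero (n : ℕ) [NeZero n] : fn n ≠ 0 := fun h => by
  have := fn_natDegree n
  rw [h, natDegree_zero] at this
  exact NeZero.ne n this.symm

private lemma root_pow_n (n : ℕ) [NeZero n] : (AdjoinRoot.root (fn n)) ^ n = 1 := by
  have h : AdjoinRoot.mk (fn n) (fn n) = 0 := AdjoinRoot.mk_self
  rw [fn, map_sub, _root_.map_one, _root_.map_pow, AdjoinRoot.mk_X, sub_eq_zero] at h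
  exact h

private def bR (n : ℕ) [NeZero n] : Module.Basis (Fin n) F₂ (AdjoinRoot (fn n)) :=
  (AdjoinRoot.powerBasis (fn_ne_zero n)).basis.reindex
    (finCongr (by rw [AdjoinRoot.powerBasis_dim, fn_natDegree]))

private lemma bR_apply (n : ℕ) [NeZero n] (i : Fin n) :
    bR n i = AdjoinRoot.root (fn n) ^ (i : ℕ) := by
  rw [bR, Module.Basis.reindex_apply, PowerBasis.basis_eq_pow, AdjoinRoot.powerBasis_gen]
  simp

private def eL (n : ℕ) [NeZero n] : AdjoinRoot (fn n) ≃ₗ[F₂] (Fin n → F₂) :=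
  (bR n).equivFun

private lemma pow_eq_pow_mod' {M : Type*} [Monoid M] {x : M} {n : ℕ}
    (hx : x ^ n = 1) (k : ℕ) : x ^ k = x ^ (k % n) := by
  conv_lhs => rw [← Nat.div_add_mod k n]
  rw [pow_add, pow_mul, hx, one_pow, one_mul]

private lemma key (n : ℕ) [NeZero n] (x : AdjoinRoot (fn n)) :
    (cyclicShift n F₂)ᵀ *ᵥ (eL n x) = eL n (AdjoinRoot.root (fn n) * x) := by
  have h : ((cyclicShift n F₂)ᵀ.mulVecLin.comp (eL n).toLinearMap)
      = (eL n).toLinearMap.comp (LinearMap.mulLeft F₂ (AdjoinRoot.root (fn n))) := by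
    apply Module.Basis.ext (bR n)
    intro i
    have hval : ((i : ℕ) + 1) % n = ((i + 1 : Fin n) : ℕ) := by
      rw [Fin.add_def, Fin.val_one']
      show ((i : ℕ) + 1) % n = ((i : ℕ) + 1 % n) % n
      conv_lhs => rw [Nat.add_mod]
      conv_rhs => rw [Nat.add_mod]
      rw [Nat.mod_mod_of_dvd 1 dvd_rfl]
    have hL2 : eL n (AdjoinRoot.root (fn n) * bR n i) = (bR n).equivFun (bR n (i + 1)) := by
      rw [bR_apply, ← pow_succ', pow_eq_pow_mod' (root_pow_n n), hval, ← bR_apply, eL]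
    simp only [LinearMap.comp_apply, LinearMap.mulLeft_apply, LinearEquiv.coe_coe, hL2]
    rw [show eL n (bR n i) = (bR n).equivFun (bR n i) from rfl]
    funext k
    rw [Module.Basis.equivFun_self, mulVecLin_apply, mulVec, dotProduct]
    simp only [Module.Basis.equivFun_self, transpose_apply, cyclicShift, mul_ite, mul_one, mul_zero]
    rw [Finset.sum_ite_eq Finset.univ i (fun j => if (k : Fin n) = j + 1 then 1 else 0)]
    simp [eq_comm]
  exact LinearMap.congr_fun h x


private def conjAlg (n : ℕ) [NeZero n] :
    Module.End F₂ (AdjoinRoot (fn n)) ≃ₐ[F₂] Module.End F₂ (Fin n → F₂) :=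
  AlgEquiv.ofLinearEquiv (eL n).conj
    (by ext v; simp [LinearEquiv.conj_apply])
    (fun x y => by ext v; simp [LinearEquiv.conj_apply, Module.End.mul_apply])

private lemma aevalQ (n : ℕ) [NeZero n] (p : (ZMod 2)[X]) (v : Fin n → F₂) :
    (aeval (cyclicShift n F₂)ᵀ p) *ᵥ v
      = eL n (AdjoinRoot.mk (fn n) p * (eL n).symm v) := by
  have hΦ : (Matrix.toLinAlgEquiv'.toAlgHom.comp (aeval (cyclicShift n F₂)ᵀ)
        : (ZMod 2)[X] →ₐ[F₂] Module.End F₂ (Fin n → F₂))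
      = (conjAlg n).toAlgHom.comp ((Algebra.lmul F₂ (AdjoinRoot (fn n))).comp
          (aeval (AdjoinRoot.root (fn n)))) := by
    apply Polynomial.algHom_ext
    apply LinearMap.ext
    intro w
    simp only [AlgHom.comp_apply, aeval_X, AlgEquiv.toAlgHom_eq_coe, AlgHom.coe_coe,
      Matrix.toLinAlgEquiv'_apply, conjAlg, AlgEquiv.ofLinearEquiv_apply,
      LinearEquiv.conj_apply, LinearMap.comp_apply, LinearEquiv.coe_coe, AlgEquiv.coe_algHom]
    rw [show ((Algebra.lmul F₂ (AdjoinRoot (fn n))) (AdjoinRoot.root (fn n)))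
        ((eL n).symm w) = AdjoinRoot.root (fn n) * (eL n).symm w from rfl]
    rw [← key n ((eL n).symm w), LinearEquiv.apply_symm_apply]
  have := congrArg (fun Φ => (Φ p) v) hΦ  -- hcongr
  simpa only [AlgHom.comp_apply, AlgEquiv.toAlgHom_eq_coe, AlgHom.coe_coe,
    Matrix.toLinAlgEquiv'_apply, conjAlg, AlgEquiv.ofLinearEquiv_apply,
    LinearEquiv.conj_apply, LinearMap.comp_apply, LinearEquiv.coe_coe,
    AdjoinRoot.aeval_eq, AlgEquiv.coe_algHom, Algebra.coe_lmul_eq_mul, LinearMap.mul_apply'] using this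

private lemma range_aevalQ (n : ℕ) [NeZero n] (p : (ZMod 2)[X]) :
    LinearMap.range (aeval (cyclicShift n F₂)ᵀ p).mulVecLin
      = Submodule.map (eL n).toLinearMap ((Ideal.span {AdjoinRoot.mk (fn n) p}).restrictScalars F₂) := by
  ext y
  constructor
  · rintro ⟨v, rfl⟩
    rw [mulVecLin_apply, aevalQ]
    exact ⟨_, Ideal.mem_span_singleton'.mpr ⟨(eL n).symm v, mul_comm _ _⟩, rfl⟩
  · rintro ⟨z, hz, rfl⟩
    obtain ⟨w, hw⟩ := Ideal.mem_span_singleton'.mp hz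
    refine ⟨eL n w, ?_⟩
    rw [mulVecLin_apply, aevalQ, LinearEquiv.symm_apply_apply, mul_comm, hw]
    rfl

private lemma rank_fromCols' (n : ℕ) [NeZero n]
    (M N : Matrix (Fin n) (Fin n) F₂) :
    (fromCols M N).rank
      = Module.finrank F₂ ↥(LinearMap.range M.mulVecLin ⊔ LinearMap.range N.mulVecLin) := by
  have hr : LinearMap.range (fromCols M N).mulVecLin
      = LinearMap.range M.mulVecLin ⊔ LinearMap.range N.mulVecLin := by
    ext y
    constructor
    · rintro ⟨v, rfl⟩
      refine Submodule.mem_sup.mpr ⟨M *ᵥ (v ∘ Sum.inl), ⟨v ∘ Sum.inl, rfl⟩,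
        N *ᵥ (v ∘ Sum.inr), ⟨v ∘ Sum.inr, rfl⟩, ?_⟩
      rw [mulVecLin_apply, ← fromCols_mulVec_sumElim, Sum.elim_comp_inl_inr]
    · rintro hy
      obtain ⟨y1, ⟨u, rfl⟩, y2, ⟨w, rfl⟩, rfl⟩ := Submodule.mem_sup.mp hy
      exact ⟨Sum.elim u w, by rw [mulVecLin_apply, fromCols_mulVec_sumElim,
        mulVecLin_apply, mulVecLin_apply]⟩
  rw [show (fromCols M N).rank
      = Module.finrank F₂ (LinearMap.range (fromCols M N).mulVecLin) from rfl, hr]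

private lemma restr_sup (n : ℕ) [NeZero n] (I J : Ideal (AdjoinRoot (fn n))) :
    (I ⊔ J).restrictScalars F₂ = I.restrictScalars F₂ ⊔ J.restrictScalars F₂ := by
  ext x
  rw [Submodule.restrictScalars_mem, Submodule.mem_sup, Submodule.mem_sup]
  simp only [Submodule.restrictScalars_mem]

private lemma rank_Q (n : ℕ) [NeZero n] (p q : (ZMod 2)[X]) :
    (fromCols (aeval (cyclicShift n F₂)ᵀ p) (aeval (cyclicShift n F₂)ᵀ q)).rank
      = Module.finrank F₂
        ((Ideal.span {AdjoinRoot.mk (fn n) p} ⊔ Ideal.span {AdjoinRoot.mk (fn n) q}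
          : Ideal (AdjoinRoot (fn n))).restrictScalars F₂) := by
  rw [rank_fromCols', range_aevalQ, range_aevalQ, ← Submodule.map_sup, ← restr_sup]
  exact LinearEquiv.finrank_map_eq (eL n) _



private lemma sq_pred_mod (n : ℕ) (hn : n ≠ 0) : ((n - 1) * (n - 1)) % n = 1 % n := by
  rcases n with _ | m
  · exact absurd rfl hn
  rcases m with _ | k
  · simp
  have h1 : k + 1 + 1 - 1 = k + 1 := rfl
  have h2 : (k + 1) * (k + 1) = 1 + k * (k + 2) := by ring
  rw [h1, h2, Nat.add_mul_mod_self_right]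

variable (n : ℕ) [NeZero n]

open Fin.NatCast in
private lemma cyclicShift_pow (k : ℕ) :
    (cyclicShift n (ZMod 2)) ^ k = fun i j => if j = i + (k : Fin n) then 1 else 0 := by
  induction k with
  | zero => funext i j; simp [Matrix.one_apply, eq_comm]
  | succ k ih =>
    rw [pow_succ, ih]
    funext i j
    erw [Matrix.mul_apply]
    simp only [cyclicShift, ite_mul, one_mul, zero_mul]
    rw [Finset.sum_ite_eq' Finset.univ (i + (k : Fin n))]
    push_cast
    simp [add_assoc]

private lemma cyclicShift_pow_n : (cyclicShift n (ZMod 2)) ^ n = 1 := by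
  rw [cyclicShift_pow]
  funext i j
  simp [Matrix.one_apply, eq_comm]

private lemma cyclicShift_mul_transpose :
    cyclicShift n (ZMod 2) * (cyclicShift n (ZMod 2))ᵀ = 1 := by
  funext i j
  rw [Matrix.mul_apply]
  simp only [transpose_apply, cyclicShift, ite_mul, one_mul, zero_mul, mul_ite, mul_one, mul_zero]
  rw [Finset.sum_ite_eq' Finset.univ (j + 1)]
  simp [Matrix.one_apply, eq_comm]

private lemma transpose_cyclicShift :
    (cyclicShift n (ZMod 2))ᵀ = (cyclicShift n (ZMod 2)) ^ (n - 1) := by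
  have h1 : (cyclicShift n (ZMod 2)) ^ (n - 1) * cyclicShift n (ZMod 2) = 1 := by
    rw [← pow_succ, Nat.sub_add_cancel (Nat.one_le_iff_ne_zero.mpr (NeZero.ne n)),
      cyclicShift_pow_n]
  calc (cyclicShift n (ZMod 2))ᵀ = 1 * (cyclicShift n (ZMod 2))ᵀ := (one_mul _).symm
    _ = (cyclicShift n (ZMod 2)) ^ (n - 1) *
        (cyclicShift n (ZMod 2) * (cyclicShift n (ZMod 2))ᵀ) := by rw [← h1, mul_assoc]
    _ = (cyclicShift n (ZMod 2)) ^ (n - 1) := by rw [cyclicShift_mul_transpose, mul_one]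

private lemma aeval_transpose {K : Type*} [CommRing K] {m : Type*} [Fintype m] [DecidableEq m]
    (M : Matrix m m K) (p : K[X]) : (aeval M p)ᵀ = aeval Mᵀ p := by
  induction p using Polynomial.induction_on' with
  | add p q hp hq => simp [hp, hq]
  | monomial k c =>
    simp [aeval_monomial, Algebra.algebraMap_eq_smul_one, smul_mul_assoc, one_mul,
      transpose_smul, transpose_pow]


private lemma span_pair_eq_gcd (p q : (ZMod 2)[X]) :
    Ideal.span {p} ⊔ Ideal.span {q} = Ideal.span {EuclideanDomain.gcd p q} := by
  apply le_antisymm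
  · apply sup_le <;> rw [Ideal.span_singleton_le_span_singleton]
    · exact EuclideanDomain.gcd_dvd_left p q
    · exact EuclideanDomain.gcd_dvd_right p q
  · rw [Ideal.span_le, Set.singleton_subset_iff, SetLike.mem_coe,
      EuclideanDomain.gcd_eq_gcd_ab p q]
    exact Submodule.add_mem_sup
      (Ideal.mul_mem_right _ _ (Ideal.subset_span (Set.mem_singleton _)))
      (Ideal.mul_mem_right _ _ (Ideal.subset_span (Set.mem_singleton _)))

private lemma finrank_span_mk (f c : (ZMod 2)[X]) (hf : f ≠ 0) :
    Module.finrank (ZMod 2) ((Ideal.span {AdjoinRoot.mk f c}).restrictScalars (ZMod 2)) =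
      f.natDegree - (EuclideanDomain.gcd c f).natDegree := by
  set g := EuclideanDomain.gcd c f with hgdef
  have hgf : g ∣ f := EuclideanDomain.gcd_dvd_right c f
  have hg0 : g ≠ 0 := fun h => hf ((EuclideanDomain.gcd_eq_zero_iff.mp h).2)
  have hspan : Ideal.span {AdjoinRoot.mk f c} = Ideal.span {AdjoinRoot.mk f g} := by
    apply le_antisymm
    · rw [Ideal.span_singleton_le_span_singleton]
      exact _root_.map_dvd _ (EuclideanDomain.gcd_dvd_left c f)
    · rw [Ideal.span_singleton_le_span_singleton]
      refine ⟨AdjoinRoot.mk f (EuclideanDomain.gcdA c f), ?_⟩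
      rw [← _root_.map_mul, AdjoinRoot.mk_eq_mk]
      exact ⟨EuclideanDomain.gcdB c f, by
        rw [hgdef, EuclideanDomain.gcd_eq_gcd_ab]; ring⟩
  rw [hspan]
  haveI : Module.Finite (ZMod 2) (AdjoinRoot f) :=
    Module.Finite.of_basis (AdjoinRoot.powerBasis hf).basis
  have hquot := Submodule.finrank_quotient_add_finrank
    ((Ideal.span {AdjoinRoot.mk f g}).restrictScalars (ZMod 2))
  have hR : Module.finrank (ZMod 2) (AdjoinRoot f) = f.natDegree := by
    rw [(AdjoinRoot.powerBasis hf).finrank, AdjoinRoot.powerBasis_dim]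
  have hle : (Ideal.span {f} : Ideal (ZMod 2)[X]) ≤ Ideal.span {g} :=
    Ideal.span_singleton_le_span_singleton.mpr hgf
  have hmap : Ideal.map (Ideal.Quotient.mkₐ (ZMod 2) (Ideal.span {f})) (Ideal.span {g}) =
      Ideal.span {AdjoinRoot.mk f g} := by
    rw [Ideal.map_span, Set.image_singleton]; rfl
  have e2 : (AdjoinRoot f ⧸ Ideal.span {AdjoinRoot.mk f g}) ≃ₐ[ZMod 2] AdjoinRoot g := by
    rw [← hmap]
    exact DoubleQuot.quotQuotEquivQuotOfLEₐ (ZMod 2) hle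
  have e1 : (AdjoinRoot f ⧸ (Ideal.span {AdjoinRoot.mk f g}).restrictScalars (ZMod 2))
      ≃ₗ[ZMod 2] AdjoinRoot g :=
    (Submodule.Quotient.restrictScalarsEquiv (ZMod 2) _).trans e2.toLinearEquiv
  have hq : Module.finrank (ZMod 2)
      (AdjoinRoot f ⧸ (Ideal.span {AdjoinRoot.mk f g}).restrictScalars (ZMod 2)) =
      g.natDegree := by
    rw [e1.finrank_eq, (AdjoinRoot.powerBasis hg0).finrank, AdjoinRoot.powerBasis_dim]
  have hdegle : g.natDegree ≤ f.natDegree := Polynomial.natDegree_le_of_dvd hgf hf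
  omega


private lemma span_pair_mk (n : ℕ) [NeZero n] (p q : (ZMod 2)[X]) :
    (Ideal.span {AdjoinRoot.mk (fn n) p} ⊔ Ideal.span {AdjoinRoot.mk (fn n) q}
      : Ideal (AdjoinRoot (fn n)))
    = Ideal.span {AdjoinRoot.mk (fn n) (EuclideanDomain.gcd p q)} := by
  have h1 : (Ideal.span {AdjoinRoot.mk (fn n) p} : Ideal (AdjoinRoot (fn n)))
      = Ideal.map (AdjoinRoot.mk (fn n)) (Ideal.span {p}) := by
    rw [Ideal.map_span, Set.image_singleton]
  have h2 : (Ideal.span {AdjoinRoot.mk (fn n) q} : Ideal (AdjoinRoot (fn n)))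
      = Ideal.map (AdjoinRoot.mk (fn n)) (Ideal.span {q}) := by
    rw [Ideal.map_span, Set.image_singleton]
  rw [h1, h2, ← Ideal.map_sup, span_pair_eq_gcd, Ideal.map_span, Set.image_singleton]

private lemma finrank_pair (n : ℕ) [NeZero n] (p q : (ZMod 2)[X]) :
    Module.finrank F₂
      ((Ideal.span {AdjoinRoot.mk (fn n) p} ⊔ Ideal.span {AdjoinRoot.mk (fn n) q}
        : Ideal (AdjoinRoot (fn n))).restrictScalars F₂)
    = n - (EuclideanDomain.gcd (EuclideanDomain.gcd p q) (fn n)).natDegree := by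
  rw [span_pair_mk, finrank_span_mk _ _ (fn_ne_zero n), fn_natDegree]

private lemma aeval_fn {A : Type*} [CommRing A] [Algebra (ZMod 2) A] (n : ℕ) (x : A) :
    aeval x (fn n) = x ^ n - 1 := by
  rw [fn, map_sub, _root_.map_one, map_pow, aeval_X]

private lemma aeval_pred (n : ℕ) [NeZero n] :
    aeval (AdjoinRoot.root (fn n) ^ (n - 1)) (fn n) = 0 := by
  rw [aeval_fn, ← pow_mul, mul_comm, pow_mul, root_pow_n, one_pow, sub_self]

private def sig (n : ℕ) [NeZero n] : AdjoinRoot (fn n) →ₐ[F₂] AdjoinRoot (fn n) :=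
  AdjoinRoot.liftAlgHom (fn n) (Algebra.ofId F₂ _) (AdjoinRoot.root (fn n) ^ (n - 1)) (aeval_pred n)

private lemma sig_mk (n : ℕ) [NeZero n] (c : (ZMod 2)[X]) :
    sig n (AdjoinRoot.mk (fn n) c) = aeval (AdjoinRoot.root (fn n) ^ (n - 1)) c := by
  unfold sig
  exact AdjoinRoot.liftAlgHom_mk _ _ _ (aeval_pred n) c

private lemma sig_comp (n : ℕ) [NeZero n] :
    (sig n).comp (sig n) = AlgHom.id F₂ (AdjoinRoot (fn n)) := by
  apply AdjoinRoot.algHom_ext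
  rw [AlgHom.comp_apply, AlgHom.id_apply]
  have h1 : (sig n) (AdjoinRoot.root (fn n)) = AdjoinRoot.root (fn n) ^ (n - 1) := by
    conv_lhs => rw [← AdjoinRoot.mk_X]
    rw [sig_mk, aeval_X]
  rw [h1, _root_.map_pow, h1, ← pow_mul, pow_eq_pow_mod' (root_pow_n n),
    sq_pred_mod n (NeZero.ne n), ← pow_eq_pow_mod' (root_pow_n n), pow_one]

private lemma sig_surj (n : ℕ) [NeZero n] : Function.Surjective (sig n) :=
  fun y => ⟨sig n y, by
    have := DFunLike.congr_fun (sig_comp n) y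
    simpa using this⟩

private def sigE (n : ℕ) [NeZero n] : AdjoinRoot (fn n) ≃ₐ[F₂] AdjoinRoot (fn n) :=
  AlgEquiv.ofAlgHom (sig n) (sig n) (sig_comp n) (sig_comp n)

private lemma finrank_map_sig (n : ℕ) [NeZero n] (I : Ideal (AdjoinRoot (fn n))) :
    Module.finrank F₂ ((Ideal.map (sig n) I).restrictScalars F₂)
      = Module.finrank F₂ (I.restrictScalars F₂) := by
  have hmap : (Ideal.map (sig n) I).restrictScalars F₂
      = Submodule.map (sigE n).toLinearEquiv.toLinearMap (I.restrictScalars F₂) := by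
    ext y
    rw [Submodule.restrictScalars_mem, Ideal.mem_map_iff_of_surjective _ (sig_surj n)]
    simp only [Submodule.mem_map, Submodule.restrictScalars_mem]
    rfl
  rw [hmap]
  exact LinearEquiv.finrank_map_eq (sigE n).toLinearEquiv _

private lemma mk_comp (n : ℕ) [NeZero n] (c : (ZMod 2)[X]) :
    AdjoinRoot.mk (fn n) (c.comp (X ^ (n - 1))) = sig n (AdjoinRoot.mk (fn n) c) := by
  rw [sig_mk, ← AdjoinRoot.aeval_eq, aeval_comp, map_pow, aeval_X]

private lemma aeval_P_eq (n : ℕ) [NeZero n] (c : (ZMod 2)[X]) :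
    aeval (cyclicShift n F₂) c = aeval (cyclicShift n F₂)ᵀ (c.comp (X ^ (n - 1))) := by
  rw [aeval_comp, map_pow, aeval_X, ← transpose_pow, ← transpose_cyclicShift n,
    transpose_transpose]

private lemma rank_HX (n : ℕ) [NeZero n] (p q : (ZMod 2)[X]) :
    (fromCols (aeval (cyclicShift n F₂) p) (aeval (cyclicShift n F₂) q)).rank
      = n - (EuclideanDomain.gcd (EuclideanDomain.gcd p q) (fn n)).natDegree := by
  rw [aeval_P_eq, aeval_P_eq, rank_Q]
  have h : (Ideal.span {AdjoinRoot.mk (fn n) (p.comp (X ^ (n - 1)))} ⊔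
        Ideal.span {AdjoinRoot.mk (fn n) (q.comp (X ^ (n - 1)))}
        : Ideal (AdjoinRoot (fn n)))
      = Ideal.map (sig n) (Ideal.span {AdjoinRoot.mk (fn n) p}
          ⊔ Ideal.span {AdjoinRoot.mk (fn n) q}) := by
    rw [Ideal.map_sup, Ideal.map_span, Ideal.map_span, Set.image_singleton,
      Set.image_singleton, mk_comp, mk_comp]
  rw [h, finrank_map_sig, finrank_pair]

private lemma rank_HZ (n : ℕ) [NeZero n] (p q : (ZMod 2)[X]) :
    (fromCols (aeval (cyclicShift n F₂) q)ᵀ (aeval (cyclicShift n F₂) p)ᵀ).rank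
      = n - (EuclideanDomain.gcd (EuclideanDomain.gcd p q) (fn n)).natDegree := by
  rw [aeval_transpose, aeval_transpose, rank_Q, sup_comm, finrank_pair]

end GBaux

/-- The number of logical qubits of the generalized bicycle CSS code with
`H_X = [A B]`, `H_Z = [Bᵀ Aᵀ]` is `k = 2n - rank H_X - rank H_Z = 2·deg gcd(a, b, xⁿ - 1)`. -/
theorem gb_code_dimension (n : ℕ) [NeZero n] (a b : Polynomial (ZMod 2)) :
    2 * n
      - (Matrix.fromCols (aeval (cyclicShift n (ZMod 2)) a)
          (aeval (cyclicShift n (ZMod 2)) b)).rank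
      - (Matrix.fromCols (aeval (cyclicShift n (ZMod 2)) b)ᵀ
          (aeval (cyclicShift n (ZMod 2)) a)ᵀ).rank
      = 2 * (EuclideanDomain.gcd (EuclideanDomain.gcd a b)
          ((X : Polynomial (ZMod 2)) ^ n - 1)).natDegree := by

  have hX := rank_HX n a b
  have hZ := rank_HZ n a b
  rw [show ((X : Polynomial (ZMod 2)) ^ n - 1) = fn n from rfl]
  rw [hX, hZ]
  have hdvd : EuclideanDomain.gcd (EuclideanDomain.gcd a b) (fn n) ∣ fn n :=
    EuclideanDomain.gcd_dvd_right _ _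
  have hle : (EuclideanDomain.gcd (EuclideanDomain.gcd a b) (fn n)).natDegree ≤ n :=
    le_trans (Polynomial.natDegree_le_of_dvd hdvd (fn_ne_zero n))
      (le_of_eq (fn_natDegree n))
  omega
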